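/- For the SOSlasso norm with unit weights, lasso and group lasso are limiting cases: for the weighted variant h_α(x) = inf{Σ_G(α‖w_G‖₂ + ‖w_G‖₁) : Σ w_G = x, supp(w_G)⊆G}, one has lim_{α→0} h_α(x) = ‖x‖₁ for every x, and h_α(x)/α converges as α → ∞ to the latent group lasso norm inf{Σ_G‖w_G‖₂ : Σ w_G = x, supp(w_G)⊆G}. -/

import Mathlib

open Finset

/-- Euclidean (ℓ2) norm of a vector in ℝ^p. -/
noncomputable def l2 {p : ℕ} (x : Fin p → ℝ) : ℝ := Real.sqrt (∑ i, (x i) ^ 2)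

/-- ℓ1 norm of a vector in ℝ^p. -/
noncomputable def l1 {p : ℕ} (x : Fin p → ℝ) : ℝ := ∑ i, |x i|

/-- `w` is supported on the group `G`. -/
def IsSupported {p : ℕ} (G : Finset (Fin p)) (w : Fin p → ℝ) : Prop :=
  ∀ i, i ∉ G → w i = 0

/-- A feasible decomposition of `x` over the group collection `𝒢`. -/
def Feasible {p : ℕ} (𝒢 : Finset (Finset (Fin p))) (x : Fin p → ℝ)
    (w : Finset (Fin p) → Fin p → ℝ) : Prop :=
  (∀ G ∈ 𝒢, IsSupported G (w G)) ∧ ∑ G ∈ 𝒢, w G = x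

/-- The SOSlasso regularizer. -/
noncomputable def soslasso {p : ℕ} (𝒢 : Finset (Finset (Fin p))) (x : Fin p → ℝ) : ℝ :=
  sInf ((fun w => ∑ G ∈ 𝒢, (l2 (w G) + l1 (w G))) '' {w | Feasible 𝒢 x w})

/-- The groups cover all of the coordinates. -/
def Covers {p : ℕ} (𝒢 : Finset (Finset (Fin p))) : Prop := ∀ i : Fin p, ∃ G ∈ 𝒢, i ∈ G

/-- Restriction of a vector to the coordinates in `G`. -/
def restr {p : ℕ} (G : Finset (Fin p)) (u : Fin p → ℝ) : Fin p → ℝ :=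
  fun i => if i ∈ G then u i else 0

/-- The dual norm of the SOSlasso regularizer. -/
noncomputable def soslassoDual {p : ℕ} (𝒢 : Finset (Finset (Fin p))) (u : Fin p → ℝ) : ℝ :=
  sSup {r | ∃ x : Fin p → ℝ, soslasso 𝒢 x ≤ 1 ∧ r = ∑ i, x i * u i}

/-- The weighted SOSlasso regularizer with group-norm weight `α`. -/
noncomputable def soslassoW {p : ℕ} (α : ℝ) (𝒢 : Finset (Finset (Fin p)))
    (x : Fin p → ℝ) : ℝ :=
  sInf ((fun w => ∑ G ∈ 𝒢, (α * l2 (w G) + l1 (w G))) '' {w | Feasible 𝒢 x w})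

/-- The latent (overlapping) group lasso norm. -/
noncomputable def latentGroupLasso {p : ℕ} (𝒢 : Finset (Finset (Fin p)))
    (x : Fin p → ℝ) : ℝ :=
  sInf ((fun w => ∑ G ∈ 𝒢, l2 (w G)) '' {w | Feasible 𝒢 x w})

lemma l2_nonneg {p : ℕ} (u : Fin p → ℝ) : 0 ≤ l2 u := Real.sqrt_nonneg _

lemma l1_nonneg {p : ℕ} (u : Fin p → ℝ) : 0 ≤ l1 u :=
  Finset.sum_nonneg fun i _ => abs_nonneg _

lemma l2_le_l1 {p : ℕ} (u : Fin p → ℝ) : l2 u ≤ l1 u := by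
  rw [l2, l1]
  rw [show (∑ i, |u i|) = Real.sqrt ((∑ i, |u i|) ^ 2) from
    (Real.sqrt_sq (Finset.sum_nonneg fun i _ => abs_nonneg _)).symm]
  apply Real.sqrt_le_sqrt
  calc ∑ i, u i ^ 2 = ∑ i, |u i| ^ 2 := by simp [sq_abs]
    _ ≤ (∑ i, |u i|) ^ 2 := Finset.sum_sq_le_sq_sum_of_nonneg fun i _ => abs_nonneg _

lemma l1_le_sum_l1 {p : ℕ} {𝒢 : Finset (Finset (Fin p))} {x : Fin p → ℝ}
    {w : Finset (Fin p) → Fin p → ℝ} (h : Feasible 𝒢 x w) :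
    l1 x ≤ ∑ G ∈ 𝒢, l1 (w G) := by
  simp only [l1]
  rw [Finset.sum_comm]
  apply Finset.sum_le_sum
  intro i _
  have hx : x i = ∑ G ∈ 𝒢, w G i := by
    rw [← h.2]; simp
  rw [hx]
  exact Finset.abs_sum_le_sum_abs _ _

lemma exists_canon {p : ℕ} (𝒢 : Finset (Finset (Fin p))) (hcov : Covers 𝒢)
    (x : Fin p → ℝ) :
    ∃ w, Feasible 𝒢 x w ∧ ∑ G ∈ 𝒢, l1 (w G) = l1 x := by
  choose f hf1 hf2 using hcov
  refine ⟨fun G i => if f i = G then x i else 0, ⟨?_, ?_⟩, ?_⟩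
  · intro G hG i hi
    dsimp only
    rw [if_neg]
    rintro rfl
    exact hi (hf2 i)
  · funext i
    simp only [Finset.sum_apply]
    rw [Finset.sum_ite_eq 𝒢 (f i) (fun _ => x i), if_pos (hf1 i)]
  · simp only [l1]
    rw [Finset.sum_comm]
    apply Finset.sum_congr rfl
    intro i _
    have : ∀ G, |if f i = G then x i else 0| = if f i = G then |x i| else 0 := by
      intro G; split <;> simp
    simp only [this]
    rw [Finset.sum_ite_eq 𝒢 (f i) (fun _ => |x i|), if_pos (hf1 i)]

/-- lasso and latent group lasso as limiting cases of the
weighted SOSlasso: `h_α(x) → ‖x‖₁` as `α → 0⁺`, and `h_α(x)/α` converges to the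
latent group lasso norm as `α → ∞`. -/
theorem soslasso_limiting_cases {p : ℕ} (𝒢 : Finset (Finset (Fin p)))
    (hcov : Covers 𝒢) (x : Fin p → ℝ) :
    Filter.Tendsto (fun α => soslassoW α 𝒢 x) (nhdsWithin 0 (Set.Ioi 0))
      (nhds (l1 x)) ∧
    Filter.Tendsto (fun α => soslassoW α 𝒢 x / α) Filter.atTop
      (nhds (latentGroupLasso 𝒢 x)) := by
  obtain ⟨w₀, hw₀, hl1⟩ := exists_canon 𝒢 hcov x
  have hne : ∀ α : ℝ,
      ((fun w => ∑ G ∈ 𝒢, (α * l2 (w G) + l1 (w G))) '' {w | Feasible 𝒢 x w}).Nonempty :=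
    fun α => ⟨_, ⟨w₀, hw₀, rfl⟩⟩
  have hbdd : ∀ α : ℝ, 0 ≤ α →
      BddBelow ((fun w => ∑ G ∈ 𝒢, (α * l2 (w G) + l1 (w G))) '' {w | Feasible 𝒢 x w}) := by
    intro α hα
    refine ⟨0, ?_⟩
    rintro b ⟨w, hw, rfl⟩
    exact Finset.sum_nonneg fun G _ =>
      add_nonneg (mul_nonneg hα (l2_nonneg _)) (l1_nonneg _)
  have hlow : ∀ α : ℝ, 0 ≤ α → l1 x ≤ soslassoW α 𝒢 x := by
    intro α hα
    apply le_csInf (hne α)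
    rintro b ⟨w, hw, rfl⟩
    calc l1 x ≤ ∑ G ∈ 𝒢, l1 (w G) := l1_le_sum_l1 hw
      _ ≤ ∑ G ∈ 𝒢, (α * l2 (w G) + l1 (w G)) :=
        Finset.sum_le_sum fun G _ =>
          le_add_of_nonneg_left (mul_nonneg hα (l2_nonneg _))
  have hup : ∀ α : ℝ, 0 ≤ α → soslassoW α 𝒢 x ≤ α * l1 x + l1 x := by
    intro α hα
    refine le_trans (csInf_le (hbdd α hα) ⟨w₀, hw₀, rfl⟩) ?_
    calc ∑ G ∈ 𝒢, (α * l2 (w₀ G) + l1 (w₀ G))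
        ≤ ∑ G ∈ 𝒢, (α * l1 (w₀ G) + l1 (w₀ G)) :=
          Finset.sum_le_sum fun G _ =>
            add_le_add (mul_le_mul_of_nonneg_left (l2_le_l1 _) hα) le_rfl
      _ = α * (∑ G ∈ 𝒢, l1 (w₀ G)) + ∑ G ∈ 𝒢, l1 (w₀ G) := by
          rw [Finset.sum_add_distrib, Finset.mul_sum]
      _ = α * l1 x + l1 x := by rw [hl1]
  constructor
  · apply tendsto_of_tendsto_of_tendsto_of_le_of_le'
      (g := fun _ : ℝ => l1 x) (h := fun α : ℝ => α * l1 x + l1 x)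
    · exact tendsto_const_nhds
    · have : Filter.Tendsto (fun α : ℝ => α * l1 x + l1 x) (nhds 0)
          (nhds (0 * l1 x + l1 x)) :=
        ((continuous_id.mul continuous_const).add continuous_const).tendsto 0
      simpa using this.mono_left nhdsWithin_le_nhds
    · exact Filter.eventually_of_mem self_mem_nhdsWithin
        fun α (hα : α ∈ Set.Ioi (0:ℝ)) => hlow α (le_of_lt hα)
    · exact Filter.eventually_of_mem self_mem_nhdsWithin
        fun α (hα : α ∈ Set.Ioi (0:ℝ)) => hup α (le_of_lt hα)
  · set N := latentGroupLasso 𝒢 x with hNdef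
    have hlatne : ((fun w => ∑ G ∈ 𝒢, l2 (w G)) '' {w | Feasible 𝒢 x w}).Nonempty :=
      ⟨_, ⟨w₀, hw₀, rfl⟩⟩
    have hlatbdd : BddBelow ((fun w => ∑ G ∈ 𝒢, l2 (w G)) '' {w | Feasible 𝒢 x w}) := by
      refine ⟨0, ?_⟩
      rintro b ⟨w, hw, rfl⟩
      exact Finset.sum_nonneg fun G _ => l2_nonneg _
    have hNle : ∀ w, Feasible 𝒢 x w → N ≤ ∑ G ∈ 𝒢, l2 (w G) :=
      fun w hw => csInf_le hlatbdd ⟨w, hw, rfl⟩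
    rw [Metric.tendsto_atTop]
    intro ε hε
    have hsplit : N < N + ε / 2 := by linarith
    obtain ⟨b, ⟨w, hw, rfl⟩, hb⟩ :=
      (csInf_lt_iff hlatbdd hlatne).mp (show sInf _ < N + ε / 2 from hsplit)
    set L := ∑ G ∈ 𝒢, l1 (w G) with hLdef
    have hL : 0 ≤ L := Finset.sum_nonneg fun G _ => l1_nonneg _
    refine ⟨max 1 (2 * L / ε), fun α hα => ?_⟩
    have hα1 : (1:ℝ) ≤ α := le_trans (le_max_left _ _) hα
    have hαpos : (0:ℝ) < α := by linarith
    have hup' : soslassoW α 𝒢 x ≤ α * (∑ G ∈ 𝒢, l2 (w G)) + L := by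
      refine le_trans (csInf_le (hbdd α hαpos.le) ⟨w, hw, rfl⟩) (le_of_eq ?_)
      dsimp only
      rw [Finset.sum_add_distrib, Finset.mul_sum]
    have hlow' : α * N ≤ soslassoW α 𝒢 x := by
      apply le_csInf (hne α)
      rintro b ⟨w', hw', rfl⟩
      calc α * N ≤ α * ∑ G ∈ 𝒢, l2 (w' G) :=
            mul_le_mul_of_nonneg_left (hNle w' hw') hαpos.le
        _ = ∑ G ∈ 𝒢, α * l2 (w' G) := Finset.mul_sum _ _ _
        _ ≤ ∑ G ∈ 𝒢, (α * l2 (w' G) + l1 (w' G)) :=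
            Finset.sum_le_sum fun G _ => le_add_of_nonneg_right (l1_nonneg _)
    have h1 : N ≤ soslassoW α 𝒢 x / α := by
      rw [le_div_iff₀ hαpos]; linarith
    have hkey : soslassoW α 𝒢 x < α * (N + ε / 2) + L := by
      refine lt_of_le_of_lt hup' ?_
      have : α * (∑ G ∈ 𝒢, l2 (w G)) < α * (N + ε / 2) :=
        mul_lt_mul_of_pos_left hb hαpos
      linarith
    have hLα : L / α ≤ ε / 2 := by
      rw [div_le_iff₀ hαpos]
      have h2L : 2 * L / ε ≤ α := le_trans (le_max_right _ _) hα
      rw [div_le_iff₀ hε] at h2L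
      linarith
    have h2 : soslassoW α 𝒢 x / α < N + ε / 2 + L / α := by
      rw [div_lt_iff₀ hαpos]
      have heq : (N + ε / 2 + L / α) * α = α * (N + ε / 2) + L := by
        field_simp
      rw [heq]; exact hkey
    rw [Real.dist_eq, abs_lt]
    constructor <;> linarith
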